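/- Let a1, a2, a3 be real numbers with a1 ≠ a2, a2 ≠ a3, a3 ≠ a1. Define P^(3)(M) = (P1, P2, P3) by P1 = M1·[(a1a2 + 8a1² − a3a2 + a3a1)M1² + (3a3a2 − 3a3a1 + 9a1a2)M2² + (9a3a1 − 3a1a2 + 3a3a2)M3²], P2 = M2·[(−3a3a2 + 3a3a1 + 9a1a2)M1² + (a3a2 − a3a1 + 8a2² + a1a2)M2² + (3a3a1 − 3a1a2 + 9a3a2)M3²], P3 = M3·[(9a3a1 + 3a1a2 − 3a3a2)M1² + (−3a3a1 + 3a1a2 + 9a3a2)M2² + (a3a1 + 8a3² − a1a2 + a3a2)M3²]. Then the function H4(M, γ) = ⟨P^(3)(M), γ⟩ is a first integral of the system Ṁ = M × aM, γ̇ = 3·γ × aM. -/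

import Mathlib

/-- Cross product in `ℝ³`. -/
def cross3 (v w : Fin 3 → ℝ) : Fin 3 → ℝ :=
  ![v 1 * w 2 - v 2 * w 1, v 2 * w 0 - v 0 * w 2, v 0 * w 1 - v 1 * w 0]

/-- Euclidean inner product in `ℝ³`. -/
def dot3 (v w : Fin 3 → ℝ) : ℝ := v 0 * w 0 + v 1 * w 1 + v 2 * w 2

/-- Componentwise action of a diagonal matrix. -/
def dmul3 (a v : Fin 3 → ℝ) : Fin 3 → ℝ := fun i => a i * v i

/-- The cubic polynomial vector P⁽³⁾(M) of the k = 3 modified Euler–Poinsot system. -/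
def P3vec (a1 a2 a3 : ℝ) (M : Fin 3 → ℝ) : Fin 3 → ℝ :=
  ![M 0 * ((a1 * a2 + 8 * a1 ^ 2 - a3 * a2 + a3 * a1) * (M 0) ^ 2
        + (3 * a3 * a2 - 3 * a3 * a1 + 9 * a1 * a2) * (M 1) ^ 2
        + (9 * a3 * a1 - 3 * a1 * a2 + 3 * a3 * a2) * (M 2) ^ 2),
    M 1 * ((-3 * a3 * a2 + 3 * a3 * a1 + 9 * a1 * a2) * (M 0) ^ 2
        + (a3 * a2 - a3 * a1 + 8 * a2 ^ 2 + a1 * a2) * (M 1) ^ 2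
        + (3 * a3 * a1 - 3 * a1 * a2 + 9 * a3 * a2) * (M 2) ^ 2),
    M 2 * ((9 * a3 * a1 + 3 * a1 * a2 - 3 * a3 * a2) * (M 0) ^ 2
        + (-3 * a3 * a1 + 3 * a1 * a2 + 9 * a3 * a2) * (M 1) ^ 2
        + (a3 * a1 + 8 * a3 ^ 2 - a1 * a2 + a3 * a2) * (M 2) ^ 2)]

/-!
Along the flow, `P⁽³⁾(M)` obeys the same equation as `γ`: a direct polynomial computation gives
`d/dt P⁽³⁾(M) = DP⁽³⁾(M)[M × aM] = 3 P⁽³⁾(M) × aM`. Two vectors `u, v` both driven by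
`ẋ = 3 x × w` keep their inner product constant, because `⟨u × w, v⟩ + ⟨u, v × w⟩ = 0`.
-/

section DiagCubic

variable {ι : Type*} [Fintype ι]

def diagCubic (C : Matrix ι ι ℝ) (x : ι → ℝ) : ι → ℝ :=
  fun i => x i * ∑ j, C i j * x j ^ 2

def diagCubicDeriv (C : Matrix ι ι ℝ) (x v : ι → ℝ) : ι → ℝ :=
  fun i => v i * ∑ j, C i j * x j ^ 2 + x i * ∑ j, C i j * (2 * x j * v j)

theorem hasDerivAt_diagCubic {x : ℝ → ι → ℝ} {x' : ι → ℝ} {t : ℝ} (C : Matrix ι ι ℝ)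
    (hx : HasDerivAt x x' t) :
    HasDerivAt (fun s => diagCubic C (x s)) (diagCubicDeriv C (x t) x') t := by
  have hxi := hasDerivAt_pi.1 hx
  refine hasDerivAt_pi.2 fun i => (hxi i).mul (HasDerivAt.fun_sum fun j _ => ?_)
  simpa using ((hxi j).pow 2).const_mul (C i j)

end DiagCubic

theorem hasDerivAt_dot3 {u v : ℝ → Fin 3 → ℝ} {u' v' : Fin 3 → ℝ} {t : ℝ}
    (hu : HasDerivAt u u' t) (hv : HasDerivAt v v' t) :
    HasDerivAt (fun s => dot3 (u s) (v s)) (dot3 u' (v t) + dot3 (u t) v') t := by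
  have hui := hasDerivAt_pi.1 hu
  have hvi := hasDerivAt_pi.1 hv
  exact ((((hui 0).mul (hvi 0)).add ((hui 1).mul (hvi 1))).add ((hui 2).mul (hvi 2))).congr_deriv
    (by simp only [dot3]; ring)

theorem dot3_cross3_add_dot3_cross3 (u v w : Fin 3 → ℝ) :
    dot3 (cross3 u w) v + dot3 u (cross3 v w) = 0 := by
  simp only [dot3, cross3, Matrix.cons_val_zero, Matrix.cons_val_one, Matrix.cons_val_two,
    Matrix.head_cons, Matrix.tail_cons]
  ring

theorem hasDerivAt_dot3_eq_zero_of_corotating {u v : ℝ → Fin 3 → ℝ} {w : Fin 3 → ℝ} {t : ℝ}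
    (c : ℝ) (hu : HasDerivAt u (c • cross3 (u t) w) t) (hv : HasDerivAt v (c • cross3 (v t) w) t) :
    HasDerivAt (fun s => dot3 (u s) (v s)) 0 t := by
  refine (hasDerivAt_dot3 hu hv).congr_deriv ?_
  have hcross := dot3_cross3_add_dot3_cross3 (u t) (v t) w
  simp only [dot3, Pi.smul_apply, smul_eq_mul] at hcross ⊢
  linear_combination c * hcross

def P3coeff (a1 a2 a3 : ℝ) : Matrix (Fin 3) (Fin 3) ℝ :=
  !![a1 * a2 + 8 * a1 ^ 2 - a3 * a2 + a3 * a1, 3 * a3 * a2 - 3 * a3 * a1 + 9 * a1 * a2,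
      9 * a3 * a1 - 3 * a1 * a2 + 3 * a3 * a2;
    -3 * a3 * a2 + 3 * a3 * a1 + 9 * a1 * a2, a3 * a2 - a3 * a1 + 8 * a2 ^ 2 + a1 * a2,
      3 * a3 * a1 - 3 * a1 * a2 + 9 * a3 * a2;
    9 * a3 * a1 + 3 * a1 * a2 - 3 * a3 * a2, -3 * a3 * a1 + 3 * a1 * a2 + 9 * a3 * a2,
      a3 * a1 + 8 * a3 ^ 2 - a1 * a2 + a3 * a2]

theorem P3vec_eq_diagCubic (a1 a2 a3 : ℝ) : P3vec a1 a2 a3 = diagCubic (P3coeff a1 a2 a3) := by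
  funext M i
  fin_cases i <;> simp [P3vec, diagCubic, P3coeff, Fin.sum_univ_three]

theorem diagCubicDeriv_P3coeff_cross3 (a1 a2 a3 : ℝ) (M : Fin 3 → ℝ) :
    diagCubicDeriv (P3coeff a1 a2 a3) M (cross3 M (dmul3 ![a1, a2, a3] M)) =
      (3 : ℝ) • cross3 (P3vec a1 a2 a3 M) (dmul3 ![a1, a2, a3] M) := by
  funext i
  fin_cases i <;>
    simp only [diagCubicDeriv, P3coeff, P3vec, cross3, dmul3, Fin.sum_univ_three, Fin.isValue,
      Fin.zero_eta, Fin.mk_one, Fin.reduceFinMk, Matrix.of_apply, Matrix.cons_val',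
      Matrix.cons_val, Matrix.cons_val_zero, Matrix.cons_val_one, Matrix.cons_val_fin_one,
      Pi.smul_apply, smul_eq_mul] <;>
    ring

theorem H4_first_integral_general (a1 a2 a3 : ℝ)
    (M γ M' γ' : ℝ → Fin 3 → ℝ)
    (hM : ∀ t i, HasDerivAt (fun s => M s i) (M' t i) t)
    (hγ : ∀ t i, HasDerivAt (fun s => γ s i) (γ' t i) t)
    (heqM : ∀ t, M' t = cross3 (M t) (dmul3 ![a1, a2, a3] (M t)))
    (heqγ : ∀ t, γ' t = fun i => 3 * cross3 (γ t) (dmul3 ![a1, a2, a3] (M t)) i) :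
    ∀ t, HasDerivAt (fun s => dot3 (P3vec a1 a2 a3 (M s)) (γ s)) 0 t := by
  intro t
  have hP := hasDerivAt_diagCubic (P3coeff a1 a2 a3) (hasDerivAt_pi.2 (hM t))
  rw [heqM, diagCubicDeriv_P3coeff_cross3, ← P3vec_eq_diagCubic] at hP
  have hγt := hasDerivAt_pi.2 (hγ t)
  rw [heqγ] at hγt
  exact hasDerivAt_dot3_eq_zero_of_corotating 3 hP hγt

/-- H4 = ⟨P⁽³⁾(M), γ⟩ is a first integral of Ṁ = M × aM, γ̇ = 3·γ × aM. -/
theorem H4_first_integral (a1 a2 a3 : ℝ)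
    (h12 : a1 ≠ a2) (h23 : a2 ≠ a3) (h31 : a3 ≠ a1)
    (M γ M' γ' : ℝ → Fin 3 → ℝ)
    (hM : ∀ t i, HasDerivAt (fun s => M s i) (M' t i) t)
    (hγ : ∀ t i, HasDerivAt (fun s => γ s i) (γ' t i) t)
    (heqM : ∀ t, M' t = cross3 (M t) (dmul3 ![a1, a2, a3] (M t)))
    (heqγ : ∀ t, γ' t = fun i => 3 * cross3 (γ t) (dmul3 ![a1, a2, a3] (M t)) i) :
    ∀ t, HasDerivAt (fun s => dot3 (P3vec a1 a2 a3 (M s)) (γ s)) 0 t :=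
  H4_first_integral_general a1 a2 a3 M γ M' γ' hM hγ heqM heqγ
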